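/- arXiv:2505.19473 — 4 statements merged into one kernel-verified Lean document; each statement's English description precedes it below -/
import Mathlib

section
/- For jointly distributed discrete random variables S and A with joint pmf p(s,a), and any conditional distribution q(a|s) with q(a|s) > 0 whenever p(s,a) > 0, the mutual information satisfies I(S;A) ≥ E_{(s,a)~p}[log(q(a|s)/p(a))], i.e., the variational (Barber–Agakov) lower bound holds. -/
open Finset

/-- Barber–Agakov variational lower bound on mutual information for finite
discrete random variables. -/
theorem barber_agakov_lower_bound
    {S A : Type*} [Fintype S] [Fintype A]
    (p : S × A → ℝ)
    (hp : ∀ x, 0 ≤ p x) (hpsum : ∑ x, p x = 1)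
    (q : S → A → ℝ)
    (hq0 : ∀ s a, 0 ≤ q s a) (hq1 : ∀ s, ∑ a, q s a = 1)
    (hqpos : ∀ s a, 0 < p (s, a) → 0 < q s a) :
    ∑ s, ∑ a, p (s, a) * Real.log (q s a / (∑ s', p (s', a)))
      ≤ ∑ s, ∑ a, p (s, a) *
          Real.log (p (s, a) / ((∑ a', p (s, a')) * (∑ s', p (s', a)))) := by
  have key : ∀ s a, p (s, a) * Real.log (q s a / (∑ s', p (s', a)))
      ≤ p (s, a) * Real.log (p (s, a) / ((∑ a', p (s, a')) * (∑ s', p (s', a))))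
        + (q s a * (∑ a', p (s, a')) - p (s, a)) := by
    intro s a
    set pS : ℝ := ∑ a', p (s, a') with hpSdef
    set pA : ℝ := ∑ s', p (s', a) with hpAdef
    have hpS0 : 0 ≤ pS := Finset.sum_nonneg fun _ _ => hp _
    rcases eq_or_lt_of_le (hp (s, a)) with h | h
    · rw [← h]
      simp only [zero_mul, sub_zero, zero_add]
      exact mul_nonneg (hq0 s a) hpS0
    · have hq := hqpos s a h
      have hps : 0 < pS :=
        lt_of_lt_of_le h (Finset.single_le_sum (fun a' _ => hp (s, a')) (mem_univ a))
      have hpa : 0 < pA :=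
        lt_of_lt_of_le h (Finset.single_le_sum (fun s' _ => hp (s', a)) (mem_univ s))
      have hlog : Real.log (q s a / pA)
          = Real.log (p (s, a) / (pS * pA)) + Real.log (q s a * pS / p (s, a)) := by
        rw [Real.log_div (ne_of_gt hq) (ne_of_gt hpa),
            Real.log_div (ne_of_gt h) (by positivity),
            Real.log_mul (ne_of_gt hps) (ne_of_gt hpa),
            Real.log_div (by positivity) (ne_of_gt h),
            Real.log_mul (ne_of_gt hq) (ne_of_gt hps)]
        ring
      rw [hlog, mul_add]
      have hle : Real.log (q s a * pS / p (s, a)) ≤ q s a * pS / p (s, a) - 1 :=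
        Real.log_le_sub_one_of_pos (by positivity)
      have h2 : p (s, a) * (q s a * pS / p (s, a) - 1) = q s a * pS - p (s, a) := by
        field_simp
      nlinarith [mul_le_mul_of_nonneg_left hle h.le]
  calc ∑ s, ∑ a, p (s, a) * Real.log (q s a / (∑ s', p (s', a)))
      ≤ ∑ s, ∑ a, (p (s, a) *
          Real.log (p (s, a) / ((∑ a', p (s, a')) * (∑ s', p (s', a))))
          + (q s a * (∑ a', p (s, a')) - p (s, a))) :=
        Finset.sum_le_sum fun s _ => Finset.sum_le_sum fun a _ => key s a
    _ = ∑ s, ∑ a, p (s, a) *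
          Real.log (p (s, a) / ((∑ a', p (s, a')) * (∑ s', p (s', a)))) := by
        have hz : ∀ s : S, ∑ a, (q s a * (∑ a', p (s, a')) - p (s, a)) = 0 := by
          intro s
          rw [Finset.sum_sub_distrib, ← Finset.sum_mul, hq1, one_mul, sub_self]
        simp [Finset.sum_add_distrib, hz]
end

section
/- For jointly distributed discrete random variables S and P with joint pmf p(s,p), the mutual information satisfies the CLUB upper bound: I(S;P) ≤ E_{(s,p)~p(s,p)}[log p(s|p)] − E_{s~p(s)} E_{p~p(p)}[log p(s|p)], where the second expectation is over independent draws of s and p. -/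
open Finset

/-- The CLUB (contrastive log-ratio upper bound) on mutual information for
finite discrete random variables `S` and `P`. -/
theorem club_upper_bound
    {S P : Type*} [Fintype S] [Fintype P]
    (p : S × P → ℝ)
    (hp : ∀ x, 0 ≤ p x) (hpsum : ∑ x, p x = 1)
    (hpos : ∀ s t, 0 < (∑ t', p (s, t')) → 0 < (∑ s', p (s', t)) →
      0 < p (s, t)) :
    ∑ s, ∑ t, p (s, t) *
        Real.log (p (s, t) / ((∑ t', p (s, t')) * (∑ s', p (s', t))))
      ≤ (∑ s, ∑ t, p (s, t) * Real.log (p (s, t) / (∑ s', p (s', t))))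
        - ∑ s, ∑ t, (∑ t', p (s, t')) * (∑ s', p (s', t)) *
            Real.log (p (s, t) / (∑ s', p (s', t))) := by
  set A : S → ℝ := fun s => ∑ t', p (s, t') with hAdef
  set B : P → ℝ := fun t => ∑ s', p (s', t) with hBdef
  have hAnn : ∀ s, 0 ≤ A s := fun s => Finset.sum_nonneg fun _ _ => hp _
  have hBnn : ∀ t, 0 ≤ B t := fun t => Finset.sum_nonneg fun _ _ => hp _
  have hleA : ∀ s t, p (s, t) ≤ A s := fun s t =>
    Finset.single_le_sum (f := fun t' => p (s, t')) (fun _ _ => hp _) (mem_univ t)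
  have hleB : ∀ s t, p (s, t) ≤ B t := fun s t =>
    Finset.single_le_sum (f := fun s' => p (s', t)) (fun _ _ => hp _) (mem_univ s)
  have hAsum : ∑ s, A s = 1 := by
    rw [← hpsum, Fintype.sum_prod_type]
  have hBsum : ∑ t, B t = 1 := by
    rw [← hpsum, Fintype.sum_prod_type, Finset.sum_comm]
  -- Step 1: split the log on the left.
  have eq1 : ∑ s, ∑ t, p (s, t) * Real.log (p (s, t) / (A s * B t))
      = (∑ s, ∑ t, p (s, t) * Real.log (p (s, t) / B t))
        - ∑ s, ∑ t, p (s, t) * Real.log (A s) := by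
    rw [← Finset.sum_sub_distrib]
    refine Finset.sum_congr rfl fun s _ => ?_
    rw [← Finset.sum_sub_distrib]
    refine Finset.sum_congr rfl fun t _ => ?_
    rcases eq_or_lt_of_le (hp (s, t)) with h0 | hpst
    · simp [← h0]
    · have hAs : 0 < A s := lt_of_lt_of_le hpst (hleA s t)
      have hBt : 0 < B t := lt_of_lt_of_le hpst (hleB s t)
      rw [← mul_sub, show p (s, t) / (A s * B t) = (p (s, t) / B t) / A s by
        rw [div_div, mul_comm (A s) (B t)], Real.log_div (by positivity) (ne_of_gt hAs)]
  have eq2 : ∑ s, ∑ t, p (s, t) * Real.log (A s) = ∑ s, A s * Real.log (A s) := by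
    refine Finset.sum_congr rfl fun s _ => ?_
    rw [← Finset.sum_mul]
  -- Key inequality.
  have key : ∑ s, ∑ t, A s * B t * Real.log (p (s, t) / B t)
      ≤ ∑ s, A s * Real.log (A s) := by
    refine Finset.sum_le_sum fun s _ => ?_
    rcases eq_or_lt_of_le (hAnn s) with hA0 | hAs
    · simp [← hA0]
    · have inner : ∑ t, B t * Real.log (p (s, t) / B t) ≤ Real.log (A s) := by
        have hterm : ∀ t, B t * Real.log (p (s, t) / B t)
            ≤ p (s, t) / A s - B t + B t * Real.log (A s) := by
          intro t
          rcases eq_or_lt_of_le (hBnn t) with hB0 | hBt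
          · have hp0 : p (s, t) = 0 := le_antisymm (hB0 ▸ hleB s t) (hp _)
            simp [← hB0, hp0]
          · have hpst : 0 < p (s, t) := hpos s t hAs hBt
            have hlog : Real.log (p (s, t) / B t)
                = Real.log (p (s, t) / (A s * B t)) + Real.log (A s) := by
              rw [show p (s, t) / (A s * B t) = (p (s, t) / B t) / A s by
                rw [div_div, mul_comm (A s) (B t)], Real.log_div (by positivity) (ne_of_gt hAs)]
              ring
            have hle : Real.log (p (s, t) / (A s * B t))
                ≤ p (s, t) / (A s * B t) - 1 :=
              Real.log_le_sub_one_of_pos (by positivity)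
            have : B t * Real.log (p (s, t) / (A s * B t))
                ≤ p (s, t) / A s - B t := by
              calc B t * Real.log (p (s, t) / (A s * B t))
                  ≤ B t * (p (s, t) / (A s * B t) - 1) :=
                    mul_le_mul_of_nonneg_left hle (le_of_lt hBt)
                _ = B t * (p (s, t) / (A s * B t)) - B t := by ring
                _ = p (s, t) / A s - B t := by
                    rw [← div_div, mul_comm (B t), div_mul_cancel₀ _ (ne_of_gt hBt)]
            rw [hlog, mul_add]
            linarith
        calc ∑ t, B t * Real.log (p (s, t) / B t)
            ≤ ∑ t, (p (s, t) / A s - B t + B t * Real.log (A s)) :=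
              Finset.sum_le_sum fun t _ => hterm t
          _ = (∑ t, p (s, t)) / A s - (∑ t, B t)
              + (∑ t, B t) * Real.log (A s) := by
              rw [Finset.sum_add_distrib, Finset.sum_sub_distrib,
                ← Finset.sum_div, ← Finset.sum_mul]
          _ = Real.log (A s) := by
              rw [hBsum]
              have : (∑ t, p (s, t)) = A s := rfl
              rw [this, div_self (ne_of_gt hAs)]
              ring
      calc ∑ t, A s * B t * Real.log (p (s, t) / B t)
          = A s * ∑ t, B t * Real.log (p (s, t) / B t) := by
            rw [Finset.mul_sum]; exact Finset.sum_congr rfl fun t _ => by ring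
        _ ≤ A s * Real.log (A s) :=
            mul_le_mul_of_nonneg_left inner (le_of_lt hAs)
  rw [eq1, eq2]
  linarith [key]
end

section
/- The CLUB gap identity holds: E_{(s,p)~joint}[log p(s|p)] − E_{s,p~marginals}[log p(s|p)] − I(S;P) = Σ_p p(p) KL(p_S ‖ p(·|p)) ≥ 0, where p_S is the marginal of S. -/
open Finset

/-- The CLUB gap identity: the CLUB estimator minus the true mutual information
equals `∑ t, p_P(t) · KL(p_S ‖ p(·|t))`, which is nonnegative. -/
theorem club_gap_identity
    {S P : Type*} [Fintype S] [Fintype P]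
    (p : S × P → ℝ)
    (hp : ∀ x, 0 ≤ p x) (hpsum : ∑ x, p x = 1)
    (hpos : ∀ s t, 0 < (∑ t', p (s, t')) → 0 < (∑ s', p (s', t)) →
      0 < p (s, t)) :
    ((∑ s, ∑ t, p (s, t) * Real.log (p (s, t) / (∑ s', p (s', t))))
        - (∑ s, ∑ t, (∑ t', p (s, t')) * (∑ s', p (s', t)) *
            Real.log (p (s, t) / (∑ s', p (s', t))))
        - ∑ s, ∑ t, p (s, t) *
            Real.log (p (s, t) / ((∑ t', p (s, t')) * (∑ s', p (s', t))))
      = ∑ t, (∑ s', p (s', t)) *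
          ∑ s, (∑ t', p (s, t')) *
            Real.log ((∑ t', p (s, t')) / (p (s, t) / (∑ s', p (s', t)))))
    ∧ 0 ≤ ∑ t, (∑ s', p (s', t)) *
          ∑ s, (∑ t', p (s, t')) *
            Real.log ((∑ t', p (s, t')) / (p (s, t) / (∑ s', p (s', t)))) := by
  classical
  -- abbreviations and basic facts
  have hpSnn : ∀ s, (0:ℝ) ≤ ∑ t', p (s, t') := fun s =>
    Finset.sum_nonneg fun t _ => hp (s, t)
  have hpPnn : ∀ t, (0:ℝ) ≤ ∑ s', p (s', t) := fun t =>
    Finset.sum_nonneg fun s _ => hp (s, t)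
  have hle_pS : ∀ s t, p (s, t) ≤ ∑ t', p (s, t') := fun s t =>
    Finset.single_le_sum (fun i _ => hp (s, i)) (Finset.mem_univ t)
  have hle_pP : ∀ s t, p (s, t) ≤ ∑ s', p (s', t) := fun s t =>
    Finset.single_le_sum (fun i _ => hp (i, t)) (Finset.mem_univ s)
  have hpS_sum : ∑ s, ∑ t', p (s, t') = 1 := by
    rw [← hpsum, Fintype.sum_prod_type]
  have hpP_sum : ∑ t, ∑ s', p (s', t) = 1 := by
    rw [Finset.sum_comm]; exact hpS_sum
  -- termwise identity for A - C
  have key1 : ∀ s t,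
      p (s, t) * Real.log (p (s, t) / (∑ s', p (s', t)))
        - p (s, t) * Real.log (p (s, t) / ((∑ t', p (s, t')) * (∑ s', p (s', t))))
      = p (s, t) * Real.log (∑ t', p (s, t')) := by
    intro s t
    rcases eq_or_lt_of_le (hp (s, t)) with h | h
    · simp [← h]
    · have hS : 0 < ∑ t', p (s, t') := lt_of_lt_of_le h (hle_pS s t)
      have hP : 0 < ∑ s', p (s', t) := lt_of_lt_of_le h (hle_pP s t)
      rw [Real.log_div h.ne' hP.ne', Real.log_div h.ne' (by positivity),
        Real.log_mul hS.ne' hP.ne']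
      ring
  have hA_C : (∑ s, ∑ t, p (s, t) * Real.log (p (s, t) / (∑ s', p (s', t))))
      - (∑ s, ∑ t, p (s, t) *
          Real.log (p (s, t) / ((∑ t', p (s, t')) * (∑ s', p (s', t)))))
      = ∑ s, (∑ t', p (s, t')) * Real.log (∑ t', p (s, t')) := by
    rw [← Finset.sum_sub_distrib]
    refine Finset.sum_congr rfl fun s _ => ?_
    rw [← Finset.sum_sub_distrib, Finset.sum_mul]
    exact Finset.sum_congr rfl fun t _ => key1 s t
  -- termwise identity for the RHS
  have key2 : ∀ t s,
      (∑ s', p (s', t)) * ((∑ t', p (s, t')) *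
          Real.log ((∑ t', p (s, t')) / (p (s, t) / (∑ s', p (s', t)))))
      = (∑ s', p (s', t)) * ((∑ t', p (s, t')) * Real.log (∑ t', p (s, t')))
        - (∑ t', p (s, t')) * (∑ s', p (s', t)) *
            Real.log (p (s, t) / (∑ s', p (s', t))) := by
    intro t s
    rcases eq_or_lt_of_le (hpPnn t) with hP | hP
    · simp [← hP]
    · rcases eq_or_lt_of_le (hpSnn s) with hS | hS
      · simp [← hS]
      · have hq : 0 < p (s, t) := hpos s t hS hP
        have hdiv : (0:ℝ) < p (s, t) / (∑ s', p (s', t)) := by positivity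
        rw [Real.log_div hS.ne' hdiv.ne']
        ring
  have hRHS : (∑ t, (∑ s', p (s', t)) *
        ∑ s, (∑ t', p (s, t')) *
          Real.log ((∑ t', p (s, t')) / (p (s, t) / (∑ s', p (s', t)))))
      = (∑ s, (∑ t', p (s, t')) * Real.log (∑ t', p (s, t')))
        - ∑ s, ∑ t, (∑ t', p (s, t')) * (∑ s', p (s', t)) *
            Real.log (p (s, t) / (∑ s', p (s', t))) := by
    have : (∑ t, (∑ s', p (s', t)) *
        ∑ s, (∑ t', p (s, t')) *
          Real.log ((∑ t', p (s, t')) / (p (s, t) / (∑ s', p (s', t)))))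
        = ∑ t, ∑ s, ((∑ s', p (s', t)) * ((∑ t', p (s, t')) * Real.log (∑ t', p (s, t')))
            - (∑ t', p (s, t')) * (∑ s', p (s', t)) *
                Real.log (p (s, t) / (∑ s', p (s', t)))) := by
      refine Finset.sum_congr rfl fun t _ => ?_
      rw [Finset.mul_sum]
      exact Finset.sum_congr rfl fun s _ => key2 t s
    rw [this]
    simp only [Finset.sum_sub_distrib]
    congr 1
    · rw [Finset.sum_comm]
      refine Finset.sum_congr rfl fun s _ => ?_
      rw [← Finset.sum_mul, hpP_sum, one_mul]
    · rw [Finset.sum_comm]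
  constructor
  · rw [hRHS]
    linarith [hA_C]
  · -- nonnegativity: each term is ≥ pS s * pP t - p (s,t)
    have key3 : ∀ t s,
        (∑ t', p (s, t')) * (∑ s', p (s', t)) - p (s, t)
          ≤ (∑ s', p (s', t)) * ((∑ t', p (s, t')) *
              Real.log ((∑ t', p (s, t')) / (p (s, t) / (∑ s', p (s', t))))) := by
      intro t s
      rcases eq_or_lt_of_le (hpPnn t) with hP | hP
      · simp only [← hP, mul_zero, zero_mul, zero_sub, zero_mul]
        linarith [hp (s, t)]
      · rcases eq_or_lt_of_le (hpSnn s) with hS | hS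
        · simp only [← hS, zero_mul, mul_zero, zero_sub]
          linarith [hp (s, t)]
        · have hq : 0 < p (s, t) := hpos s t hS hP
          set w : ℝ := (∑ t', p (s, t')) * (∑ s', p (s', t)) with hw
          have hwpos : 0 < w := mul_pos hS hP
          have harg : (∑ t', p (s, t')) / (p (s, t) / (∑ s', p (s', t)))
              = w / p (s, t) := by
            field_simp [hw]
            exact hw.symm
          rw [harg]
          have hlog : Real.log (p (s, t) / w) ≤ p (s, t) / w - 1 :=
            Real.log_le_sub_one_of_pos (by positivity)
          have hlog2 : Real.log (w / p (s, t))
              = - Real.log (p (s, t) / w) := by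
            rw [Real.log_div hwpos.ne' hq.ne', Real.log_div hq.ne' hwpos.ne']
            ring
          have h1 : w - p (s, t) ≤ w * Real.log (w / p (s, t)) := by
            rw [hlog2]
            have := mul_le_mul_of_nonneg_left hlog hwpos.le
            have hwq : w * (p (s, t) / w) = p (s, t) := by
              field_simp
            nlinarith
          calc w - p (s, t) ≤ w * Real.log (w / p (s, t)) := h1
            _ = (∑ s', p (s', t)) * ((∑ t', p (s, t')) *
                Real.log (w / p (s, t))) := by rw [hw]; ring
    have hsum : (∑ t, ∑ s, ((∑ t', p (s, t')) * (∑ s', p (s', t)) - p (s, t)))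
        = 0 := by
      simp only [Finset.sum_sub_distrib]
      have h1 : (∑ t, ∑ s, (∑ t', p (s, t')) * (∑ s', p (s', t))) = 1 := by
        have : ∀ t, (∑ s, (∑ t', p (s, t')) * (∑ s', p (s', t)))
            = (∑ s', p (s', t)) := by
          intro t
          rw [← Finset.sum_mul, hpS_sum, one_mul]
        rw [Finset.sum_congr rfl fun t _ => this t, hpP_sum]
      have h2 : (∑ t, ∑ s, p (s, t)) = 1 := hpP_sum
      rw [h1, h2]; ring
    calc (0:ℝ) = ∑ t, ∑ s, ((∑ t', p (s, t')) * (∑ s', p (s', t)) - p (s, t)) :=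
          hsum.symm
      _ ≤ ∑ t, ∑ s, (∑ s', p (s', t)) * ((∑ t', p (s, t')) *
            Real.log ((∑ t', p (s, t')) / (p (s, t) / (∑ s', p (s', t))))) := by
          refine Finset.sum_le_sum fun t _ => Finset.sum_le_sum fun s _ => key3 t s
      _ = ∑ t, (∑ s', p (s', t)) *
            ∑ s, (∑ t', p (s, t')) *
              Real.log ((∑ t', p (s, t')) / (p (s, t) / (∑ s', p (s', t)))) := by
          exact Finset.sum_congr rfl fun t _ => (Finset.mul_sum _ _ _).symm
end

section
/- If I(S;P) = 0 and I(S;A) = I(U;A) where U determines both S and P (S = σ(U), P = π(U) as deterministic functions), then I(P;A) = 0: a sensitive-blind representation that is independent of a sufficient sensitive representation carries no sensitive information — provided additionally that A is conditionally independent of U given S. -/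
/-!
Sufficiency of `S` factors the joint law as `p(u, a) = p(u) · p(a | S = σ u)`. Summing over the
fibre `{π = t}` and regrouping by the value of `S`, independence of `S` and `P` pulls out the
factor `p(P = t)`, and what remains, `∑ s, p(S = s) · p(a | S = s)`, is `p(A = a)`. The mutual
information of a product law vanishes term by term.
-/

open Finset

section Regrouping

variable {ι κ R : Type*} [Fintype ι] [Fintype κ] [DecidableEq κ]

theorem sum_sum_ite_eq_sum [AddCommMonoid R] (f : ι → κ) (w : ι → R) :
    ∑ k, ∑ i, (if f i = k then w i else 0) = ∑ i, w i := by
  rw [Finset.sum_comm]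
  simp

theorem sum_mul_comp_eq_sum_fiber_mul [NonUnitalNonAssocSemiring R]
    (f : ι → κ) (w : ι → R) (q : κ → R) :
    ∑ i, w i * q (f i) = ∑ k, (∑ i, if f i = k then w i else 0) * q k := by
  simp only [Finset.sum_mul, ite_mul, zero_mul]
  rw [Finset.sum_comm]
  refine Finset.sum_congr rfl fun i _ => ?_
  simp

end Regrouping

theorem sum_mul_log_div_marginals_eq_zero {X Y : Type*} [Fintype X] [Fintype Y]
    (r : X → Y → ℝ) (f : X → ℝ) (g : Y → ℝ) (hf : ∑ x, f x = 1) (hg : ∑ y, g y = 1)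
    (hr : ∀ x y, r x y = f x * g y) :
    ∑ x, ∑ y, r x y * Real.log (r x y / ((∑ y', r x y') * (∑ x', r x' y))) = 0 := by
  have hrow : ∀ x, ∑ y, r x y = f x := fun x => by simp only [hr, ← Finset.mul_sum, hg, mul_one]
  have hcol : ∀ y, ∑ x, r x y = g y := fun y => by simp only [hr, ← Finset.sum_mul, hf, one_mul]
  refine Finset.sum_eq_zero fun x _ => Finset.sum_eq_zero fun y _ => ?_
  rw [hrow, hcol, ← hr]
  rcases eq_or_ne (r x y) 0 with h | h
  · rw [h, zero_mul]
  · rw [div_self h, Real.log_one, mul_zero]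

section Sufficiency

variable {U A S : Type*} [Fintype U] [Fintype A] [DecidableEq S]

noncomputable def condProbGiven (p : U × A → ℝ) (σ : U → S) (s : S) (a : A) : ℝ :=
  (∑ u, if σ u = s then p (u, a) else 0) / (∑ u, if σ u = s then (∑ a', p (u, a')) else 0)

theorem eq_marginal_mul_condProbGiven (p : U × A → ℝ) (hp : ∀ x, 0 ≤ p x) (σ : U → S)
    (hAUS : ∀ u a, 0 < (∑ a', p (u, a')) →
      p (u, a) / (∑ a', p (u, a'))
        = (∑ u', if σ u' = σ u then p (u', a) else 0)
          / (∑ u', if σ u' = σ u then (∑ a', p (u', a')) else 0))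
    (u : U) (a : A) :
    p (u, a) = (∑ a', p (u, a')) * condProbGiven p σ (σ u) a := by
  rcases (Finset.sum_nonneg fun a' _ => hp (u, a')).eq_or_lt with hzero | hpos
  · have hpa : p (u, a) = 0 := le_antisymm
      (hzero ▸ Finset.single_le_sum (fun a' _ => hp (u, a')) (Finset.mem_univ a)) (hp _)
    rw [hpa, ← hzero, zero_mul]
  · rw [condProbGiven, ← hAUS u a hpos, mul_div_cancel₀ _ hpos.ne']

theorem sum_ite_eq_mul_of_sufficient_of_indep [Fintype S] {T : Type*} [Fintype T] [DecidableEq T]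
    (p : U × A → ℝ) (hp : ∀ x, 0 ≤ p x) (σ : U → S) (π : U → T)
    (hSP : ∀ (s : S) (t : T),
      (∑ u, if σ u = s ∧ π u = t then (∑ a, p (u, a)) else 0)
        = (∑ u, if σ u = s then (∑ a, p (u, a)) else 0)
          * (∑ u, if π u = t then (∑ a, p (u, a)) else 0))
    (hAUS : ∀ u a, 0 < (∑ a', p (u, a')) →
      p (u, a) / (∑ a', p (u, a'))
        = (∑ u', if σ u' = σ u then p (u', a) else 0)
          / (∑ u', if σ u' = σ u then (∑ a', p (u', a')) else 0))
    (t : T) (a : A) :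
    (∑ u, if π u = t then p (u, a) else 0)
      = (∑ u, if π u = t then (∑ a', p (u, a')) else 0) * (∑ u, p (u, a)) := by
  set q : S → ℝ := (condProbGiven p σ · a)
  have hfac : ∀ u, p (u, a) = (∑ a', p (u, a')) * q (σ u) :=
    (eq_marginal_mul_condProbGiven p hp σ hAUS · a)
  calc (∑ u, if π u = t then p (u, a) else 0)
      = ∑ u, (if π u = t then ∑ a', p (u, a') else 0) * q (σ u) := by
        refine Finset.sum_congr rfl fun u _ => ?_
        rw [hfac u, ite_mul, zero_mul]
    _ = ∑ s, ((∑ u, if σ u = s then (∑ a', p (u, a')) else 0)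
          * (∑ u, if π u = t then (∑ a', p (u, a')) else 0)) * q s := by
        rw [sum_mul_comp_eq_sum_fiber_mul σ]
        simp only [← hSP, ite_and]
    _ = (∑ u, if π u = t then (∑ a', p (u, a')) else 0)
          * ∑ u, (∑ a', p (u, a')) * q (σ u) := by
        rw [sum_mul_comp_eq_sum_fiber_mul σ, Finset.mul_sum]
        exact Finset.sum_congr rfl fun s _ => by ring
    _ = (∑ u, if π u = t then (∑ a', p (u, a')) else 0) * (∑ u, p (u, a)) := by
        simp only [← hfac]

end Sufficiency

/-- If `S = σ(U)` and `P = π(U)` are deterministic functions of `U`, `S` and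
`P` are independent, and `A` is conditionally independent of `U` given `S`,
then `P` is independent of `A` and `I(P;A) = 0`. -/
theorem sensitive_blind_independence
    {U A Sv Pv : Type*} [Fintype U] [Fintype A]
    [Fintype Sv] [DecidableEq Sv] [Fintype Pv] [DecidableEq Pv]
    (p : U × A → ℝ)
    (hp : ∀ x, 0 ≤ p x) (hpsum : ∑ x, p x = 1)
    (σ : U → Sv) (π : U → Pv)
    (hSP : ∀ (s : Sv) (t : Pv),
      (∑ u, if σ u = s ∧ π u = t then (∑ a, p (u, a)) else 0)
        = (∑ u, if σ u = s then (∑ a, p (u, a)) else 0)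
          * (∑ u, if π u = t then (∑ a, p (u, a)) else 0))
    (hAUS : ∀ u a, 0 < (∑ a', p (u, a')) →
      p (u, a) / (∑ a', p (u, a'))
        = (∑ u', if σ u' = σ u then p (u', a) else 0)
          / (∑ u', if σ u' = σ u then (∑ a', p (u', a')) else 0)) :
    (∀ (t : Pv) (a : A),
      (∑ u, if π u = t then p (u, a) else 0)
        = (∑ u, if π u = t then (∑ a', p (u, a')) else 0)
          * (∑ u, p (u, a)))
    ∧ (∑ t : Pv, ∑ a : A,
        (∑ u, if π u = t then p (u, a) else 0) *
          Real.log ((∑ u, if π u = t then p (u, a) else 0) /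
            ((∑ a', ∑ u, if π u = t then p (u, a') else 0)
              * (∑ t', ∑ u, if π u = t' then p (u, a) else 0)))
        = 0) := by
  have hindep := sum_ite_eq_mul_of_sufficient_of_indep p hp σ π hSP hAUS
  have hP : ∑ t, ∑ u, (if π u = t then ∑ a', p (u, a') else 0) = 1 := by
    rw [sum_sum_ite_eq_sum, ← Fintype.sum_prod_type, hpsum]
  have hA : ∑ a, ∑ u, p (u, a) = 1 := by
    rw [Finset.sum_comm, ← Fintype.sum_prod_type, hpsum]
  exact ⟨hindep, sum_mul_log_div_marginals_eq_zero _ _ _ hP hA hindep⟩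
end
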